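/- arXiv:2605.30789 — 3 statements merged into one kernel-verified Lean document; each statement's English description precedes it below -/
import Mathlib

section
/- Let (Ω, P) be a probability space, let M be a measurable event, let B ≥ 0, and let f, g : Ω → ℝ be measurable random variables with |f| ≤ B almost surely and |g| ≤ B almost surely. Suppose there exists a constant c ∈ ℝ such that f = c almost surely on M. Then |E[f·g] − E[f]·E[g]| ≤ 5 · B² · P(Mᶜ). -/
/-!
For every constant `c`, the covariance equals `E[(f - c) · (g - E g)]`. The integrand vanishes
on `M` and is bounded by `(2B)²` elsewhere, so the covariance is at most `4 B² P(Mᶜ)`. To have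
`|f - c| ≤ 2B` we need `|c| ≤ B`; this can be arranged by clamping `c` to `[-B, B]`,
which changes nothing where `f = c`.
-/

open MeasureTheory

section

variable {Ω : Type*} [MeasurableSpace Ω] {μ : Measure Ω}

lemma abs_integral_le_mul_measureReal_compl_of_ae_eq_zero [IsFiniteMeasure μ] {M : Set Ω}
    (hM : MeasurableSet M) {K : ℝ} {h : Ω → ℝ} (hbound : ∀ᵐ ω ∂μ, |h ω| ≤ K)
    (hzero : ∀ᵐ ω ∂μ, ω ∈ M → h ω = 0) :
    |∫ ω, h ω ∂μ| ≤ K * μ.real Mᶜ := by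
  have hle : ∀ᵐ ω ∂μ, ‖h ω‖ ≤ Mᶜ.indicator (fun _ ↦ K) ω := by
    filter_upwards [hbound, hzero] with ω hω hω₀
    by_cases hωM : ω ∈ M
    · simp [hωM, hω₀ hωM]
    · simpa [hωM] using hω
  calc |∫ ω, h ω ∂μ| ≤ ∫ ω, Mᶜ.indicator (fun _ ↦ K) ω ∂μ :=
        norm_integral_le_of_norm_le ((integrable_const K).indicator hM.compl) hle
    _ = K * μ.real Mᶜ := by rw [integral_indicator_const K hM.compl, smul_eq_mul, mul_comm]

lemma integral_mul_sub_integral_mul_integral_eq [IsProbabilityMeasure μ] {f g : Ω → ℝ}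
    (hf : Integrable f μ) (hg : Integrable g μ) (hfg : Integrable (fun ω ↦ f ω * g ω) μ)
    (c : ℝ) :
    (∫ ω, f ω * g ω ∂μ) - (∫ ω, f ω ∂μ) * (∫ ω, g ω ∂μ)
      = ∫ ω, (f ω - c) * (g ω - ∫ ω, g ω ∂μ) ∂μ := by
  set m := ∫ ω, g ω ∂μ
  have hexpand : (fun ω ↦ (f ω - c) * (g ω - m))
      = fun ω ↦ (f ω * g ω - m * f ω) - (c * g ω - c * m) := by
    ext ω; ring
  have hleft : Integrable (fun ω ↦ f ω * g ω - m * f ω) μ := hfg.sub (hf.const_mul m)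
  have hright : Integrable (fun ω ↦ c * g ω - c * m) μ := (hg.const_mul c).sub (integrable_const _)
  rw [hexpand, integral_sub hleft hright,
    integral_sub hfg (hf.const_mul _), integral_sub (hg.const_mul c) (integrable_const _),
    integral_const_mul, integral_const_mul, integral_const, probReal_univ, one_smul]
  ring

lemma ae_eq_clamp_of_ae_eq {M : Set Ω} {B c : ℝ} {f : Ω → ℝ} (hfb : ∀ᵐ ω ∂μ, |f ω| ≤ B)
    (hconst : ∀ᵐ ω ∂μ, ω ∈ M → f ω = c) :
    ∀ᵐ ω ∂μ, ω ∈ M → f ω = max (-B) (min c B) := by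
  filter_upwards [hfb, hconst] with ω hω hω_eq hωM
  rw [hω_eq hωM] at hω ⊢
  obtain ⟨hlo, hhi⟩ := abs_le.mp hω
  rw [min_eq_left hhi, max_eq_right hlo]

lemma abs_clamp_le {B : ℝ} (hB : 0 ≤ B) (c : ℝ) : |max (-B) (min c B)| ≤ B :=
  abs_le.mpr ⟨le_max_left _ _, max_le (by linarith) (min_le_right _ _)⟩

end

/-- **Gradient projection covariance (Corollary A.3).**
If `|f| ≤ B` and `|g| ≤ B` a.s. and `f` is a.s. constant on the event `M`, then
`|Cov(f, g)| = |E[f·g] − E[f]·E[g]| ≤ 5 · B² · P(Mᶜ)`. -/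
theorem gradient_projection_covariance_bound
    {Ω : Type*} [MeasurableSpace Ω] (μ : Measure Ω) [IsProbabilityMeasure μ]
    (M : Set Ω) (hM : MeasurableSet M)
    (B : ℝ) (hB : 0 ≤ B)
    (f g : Ω → ℝ) (hf : Measurable f) (hg : Measurable g)
    (hfb : ∀ᵐ ω ∂μ, |f ω| ≤ B) (hgb : ∀ᵐ ω ∂μ, |g ω| ≤ B)
    (c : ℝ) (hconst : ∀ᵐ ω ∂μ, ω ∈ M → f ω = c) :
    |(∫ ω, f ω * g ω ∂μ) - (∫ ω, f ω ∂μ) * (∫ ω, g ω ∂μ)| ≤ 5 * B ^ 2 * (μ Mᶜ).toReal := by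
  set c' := max (-B) (min c B)
  have hc' : |c'| ≤ B := abs_clamp_le hB c
  have hfgb : ∀ᵐ ω ∂μ, ‖f ω * g ω‖ ≤ B * B := by
    filter_upwards [hfb, hgb] with ω hfω hgω
    rw [Real.norm_eq_abs, abs_mul]
    exact mul_le_mul hfω hgω (abs_nonneg _) hB
  have hEg : |∫ ω, g ω ∂μ| ≤ B := by
    simpa using norm_integral_le_of_norm_le_const (μ := μ) (f := g) (by simpa using hgb)
  rw [integral_mul_sub_integral_mul_integral_eq
    (.of_bound hf.aestronglyMeasurable B (by simpa using hfb))
    (.of_bound hg.aestronglyMeasurable B (by simpa using hgb))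
    (.of_bound (hf.mul hg).aestronglyMeasurable _ hfgb) c']
  have hbound : ∀ᵐ ω ∂μ, |(f ω - c') * (g ω - ∫ ω, g ω ∂μ)| ≤ (2 * B) * (2 * B) := by
    filter_upwards [hfb, hgb] with ω hfω hgω
    rw [abs_mul]
    exact mul_le_mul ((abs_sub _ _).trans (by linarith)) ((abs_sub _ _).trans (by linarith))
      (abs_nonneg _) (by linarith)
  have hzero : ∀ᵐ ω ∂μ, ω ∈ M → (f ω - c') * (g ω - ∫ ω, g ω ∂μ) = 0 := by
    filter_upwards [ae_eq_clamp_of_ae_eq hfb hconst] with ω hω hωM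
    rw [hω hωM, sub_self, zero_mul]
  calc _ ≤ (2 * B) * (2 * B) * μ.real Mᶜ :=
        abs_integral_le_mul_measureReal_compl_of_ae_eq_zero hM hbound hzero
    _ ≤ 5 * B ^ 2 * (μ Mᶜ).toReal := by
        rw [measureReal_def]; nlinarith [ENNReal.toReal_nonneg (a := μ Mᶜ), sq_nonneg B]
end

section
/- Let (Ω, P) be a probability space, d a natural number, v ∈ ℝ^d a fixed vector, and B ≥ 0. Let z_t, z_s : Ω → ℝ be measurable random variables with |z_t| ≤ B and |z_s| ≤ B almost surely, let H_t, H_s : Ω → Matrix(d, d, ℝ) be measurable random matrices with almost surely bounded entries, and let δ : Ω → ℝ^d be a measurable random vector with almost surely bounded entries such that E[δ_i] = 0 for every coordinate i and δ is independent of the σ-algebra generated by (z_t, z_s, H_t, H_s). Let Σ_{ij} = E[δ_i · δ_j] and set γ = E[vᵀ H_t Σ H_sᵀ v]. Suppose M is a measurable event and there exists a constant c ∈ ℝ with z_t = c almost surely on M. Define z̃_t = z_t + vᵀ H_t δ and z̃_s = z_s + vᵀ H_s δ. Then |Cov(z̃_t, z̃_s)| ≥ γ − 5 · B² · P(Mᶜ).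 -/
open MeasureTheory ProbabilityTheory Matrix

instance {m n α : Type*} [MeasurableSpace α] : MeasurableSpace (Matrix m n α) :=
  inferInstanceAs (MeasurableSpace (m → n → α))

/-- Covariance of two real random variables: `Cov(X, Y) = E[X·Y] − E[X]·E[Y]`. -/
noncomputable def cov {Ω : Type*} [MeasurableSpace Ω] (μ : Measure Ω) (X Y : Ω → ℝ) : ℝ :=
  (∫ ω, X ω * Y ω ∂μ) - (∫ ω, X ω ∂μ) * (∫ ω, Y ω ∂μ)

/-!
Write `vᵀ H δ = (vᵀ H) ⬝ δ`. Since `δ` has mean zero and is independent of `(z_t, z_s, H_t, H_s)`,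
the perturbations have mean zero, are uncorrelated with `z_t` and `z_s`, and their product has mean
`E[(vᵀ H_t) Σ (vᵀ H_s)ᵀ] = γ`; hence `Cov(z̃_t, z̃_s) = Cov(z_t, z_s) + γ`. The constant value `c`
of `z_t` on `M` may be taken with `|c| ≤ B` (any `c` works if `M` is null), and then
`Cov(z_t, z_s) = E[(z_t - c)(z_s - E z_s)]` integrates a function that vanishes on `M` and is
bounded by `4B²`, so `|Cov(z_t, z_s)| ≤ 4B² P(Mᶜ)`.
-/

open scoped ENNReal

lemma Matrix.dotProduct_mul_dotProduct {ι R : Type*} [Fintype ι] [CommSemiring R]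
    (a x b y : ι → R) :
    (a ⬝ᵥ x) * (b ⬝ᵥ y) = (fun p : ι × ι => a p.1 * b p.2) ⬝ᵥ fun p => x p.1 * y p.2 := by
  simp only [dotProduct, Finset.sum_mul_sum, Fintype.sum_prod_type]
  exact Finset.sum_congr rfl fun i _ => Finset.sum_congr rfl fun j _ => by ring

lemma Matrix.dotProduct_mulVec_eq_sum_prod {ι R : Type*} [Fintype ι] [CommSemiring R]
    (a b : ι → R) (S : Matrix ι ι R) : a ⬝ᵥ S *ᵥ b = ∑ p : ι × ι, a p.1 * b p.2 * S p.1 p.2 := by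
  simp only [dotProduct, mulVec, Finset.mul_sum, Fintype.sum_prod_type]
  exact Finset.sum_congr rfl fun i _ => Finset.sum_congr rfl fun j _ => by ring

@[fun_prop]
lemma Matrix.measurable_vecMul {m n : Type*} [Fintype m] (v : m → ℝ) :
    Measurable fun H : Matrix m n ℝ => v ᵥ* H :=
  measurable_pi_lambda _ fun j => Finset.measurable_sum _ fun i _ => by fun_prop

lemma MeasureTheory.MemLp.vecMul_apply {Ω m n : Type*} [MeasurableSpace Ω] {μ : Measure Ω}
    {p : ℝ≥0∞} [Fintype m] {H : Ω → Matrix m n ℝ} (hH : ∀ i j, MemLp (fun ω => H ω i j) p μ)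
    (v : m → ℝ) (j : n) : MemLp (fun ω => (v ᵥ* H ω) j) p μ :=
  memLp_finsetSum _ fun i _ => (hH i j).const_mul (v i)

section

variable {Ω ι : Type*} [MeasurableSpace Ω] {μ : Measure Ω} [Fintype ι]

lemma ProbabilityTheory.IndepFun.integral_dotProduct {a δ : Ω → ι → ℝ} (h : IndepFun a δ μ)
    (ha : ∀ i, Integrable (fun ω => a ω i) μ) (hδ : ∀ i, Integrable (fun ω => δ ω i) μ) :
    ∫ ω, a ω ⬝ᵥ δ ω ∂μ = ∑ i, (∫ ω, a ω i ∂μ) * ∫ ω, δ ω i ∂μ := by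
  have hi : ∀ i, IndepFun (fun ω => a ω i) (fun ω => δ ω i) μ := fun i =>
    h.comp (measurable_pi_apply i) (measurable_pi_apply i)
  have hint : ∀ i, Integrable (fun ω => a ω i * δ ω i) μ := fun i =>
    (hi i).integrable_mul (ha i) (hδ i)
  simp only [dotProduct]
  rw [integral_finsetSum _ fun i _ => hint i]
  exact Finset.sum_congr rfl fun i _ => (hi i).integral_mul_eq_mul_integral (ha i).1 (hδ i).1

lemma ProbabilityTheory.IndepFun.integral_dotProduct_mul_dotProduct {a b δ : Ω → ι → ℝ}
    (h : IndepFun (fun ω => (a ω, b ω)) δ μ)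
    (hab : ∀ i j, Integrable (fun ω => a ω i * b ω j) μ)
    (hδ : ∀ i j, Integrable (fun ω => δ ω i * δ ω j) μ)
    {S : Matrix ι ι ℝ} (hS : ∀ i j, S i j = ∫ ω, δ ω i * δ ω j ∂μ) :
    ∫ ω, (a ω ⬝ᵥ δ ω) * (b ω ⬝ᵥ δ ω) ∂μ = ∫ ω, a ω ⬝ᵥ S *ᵥ b ω ∂μ := by
  have hprod : IndepFun (fun ω (p : ι × ι) => a ω p.1 * b ω p.2)
      (fun ω (p : ι × ι) => δ ω p.1 * δ ω p.2) μ :=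
    h.comp (φ := fun (x : (ι → ℝ) × (ι → ℝ)) (p : ι × ι) => x.1 p.1 * x.2 p.2)
      (ψ := fun (x : ι → ℝ) (p : ι × ι) => x p.1 * x p.2) (by fun_prop) (by fun_prop)
  simp_rw [dotProduct_mul_dotProduct, dotProduct_mulVec_eq_sum_prod]
  rw [hprod.integral_dotProduct (fun p => hab p.1 p.2) (fun p => hδ p.1 p.2),
    integral_finsetSum _ fun p _ => (hab p.1 p.2).mul_const _]
  simp only [hS, integral_mul_const]

lemma cov_add_add_of_uncorrelated [IsFiniteMeasure μ] {X Y A B : Ω → ℝ}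
    (hX : MemLp X 2 μ) (hY : MemLp Y 2 μ) (hA : MemLp A 2 μ) (hB : MemLp B 2 μ)
    (hA0 : ∫ ω, A ω ∂μ = 0) (hB0 : ∫ ω, B ω ∂μ = 0)
    (hXB : ∫ ω, X ω * B ω ∂μ = 0) (hAY : ∫ ω, A ω * Y ω ∂μ = 0) :
    cov μ (fun ω => X ω + A ω) (fun ω => Y ω + B ω) = cov μ X Y + ∫ ω, A ω * B ω ∂μ := by
  have expand : ∀ ω, (X ω + A ω) * (Y ω + B ω)
      = X ω * Y ω + X ω * B ω + (A ω * Y ω + A ω * B ω) := fun ω => by ring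
  have iXY : Integrable (fun ω => X ω * Y ω) μ := hX.integrable_mul hY
  have iXB : Integrable (fun ω => X ω * B ω) μ := hX.integrable_mul hB
  have iAY : Integrable (fun ω => A ω * Y ω) μ := hA.integrable_mul hY
  have iAB : Integrable (fun ω => A ω * B ω) μ := hA.integrable_mul hB
  simp only [cov, expand]
  rw [integral_add (iXY.fun_add iXB) (iAY.fun_add iAB), integral_add iXY iXB,
    integral_add iAY iAB,
    integral_add (hX.integrable one_le_two) (hA.integrable one_le_two),
    integral_add (hY.integrable one_le_two) (hB.integrable one_le_two), hA0, hB0, hXB, hAY]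
  ring

end

section

variable {Ω : Type*} [MeasurableSpace Ω] {μ : Measure Ω}

lemma exists_abs_le_of_ae_eq_on {X : Ω → ℝ} {M : Set Ω} {B c : ℝ} (hB : 0 ≤ B)
    (hXB : ∀ᵐ ω ∂μ, |X ω| ≤ B) (hXc : ∀ᵐ ω ∂μ, ω ∈ M → X ω = c) :
    ∃ c', |c'| ≤ B ∧ ∀ᵐ ω ∂μ, ω ∈ M → X ω = c' := by
  by_cases hM : ∀ᵐ ω ∂μ, ω ∉ M
  · exact ⟨0, by simpa using hB, hM.mono fun ω hω hωM => absurd hωM hω⟩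
  · obtain ⟨ω, hωM, hXω, hXωB⟩ :=
      ((Filter.not_eventually.mp hM).and_eventually (hXc.and hXB)).exists
    exact ⟨c, by simpa only [← hXω (not_not.mp hωM)] using hXωB, hXc⟩

lemma abs_integral_le_of_ae_eq_zero_on [IsFiniteMeasure μ] {f : Ω → ℝ} {M : Set Ω} {D : ℝ}
    (hf0 : ∀ᵐ ω ∂μ, ω ∈ M → f ω = 0) (hfD : ∀ᵐ ω ∂μ, |f ω| ≤ D) :
    |∫ ω, f ω ∂μ| ≤ D * μ.real Mᶜ := by
  rw [← setIntegral_eq_integral_of_ae_compl_eq_zero (s := Mᶜ) (by simpa using hf0)]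
  exact norm_setIntegral_le_of_norm_le_const_ae' (measure_lt_top _ _)
    (hfD.mono fun ω h _ => (Real.norm_eq_abs _).trans_le h)

lemma cov_eq_integral_sub_mul_sub [IsProbabilityMeasure μ] {X Y : Ω → ℝ}
    (hX : Integrable X μ) (hY : Integrable Y μ) (hXY : Integrable (fun ω => X ω * Y ω) μ)
    (c : ℝ) : cov μ X Y = ∫ ω, (X ω - c) * (Y ω - ∫ ω', Y ω' ∂μ) ∂μ := by
  have expand : ∀ ω, (X ω - c) * (Y ω - ∫ ω', Y ω' ∂μ)
      = X ω * Y ω - (∫ ω', Y ω' ∂μ) * X ω - (c * Y ω - c * ∫ ω', Y ω' ∂μ) := fun ω => by ring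
  simp only [expand]
  rw [integral_sub (hXY.sub' (hX.const_mul _)) ((hY.const_mul c).sub' (integrable_const _)),
    integral_sub hXY (hX.const_mul _), integral_sub (hY.const_mul c) (integrable_const _),
    integral_const_mul, integral_const_mul, integral_const, probReal_univ, one_smul, cov]
  ring

lemma abs_cov_le_of_ae_eq_on [IsProbabilityMeasure μ] {X Y : Ω → ℝ} {M : Set Ω} {B c : ℝ}
    (hB : 0 ≤ B) (hX : AEStronglyMeasurable X μ) (hY : AEStronglyMeasurable Y μ)
    (hXB : ∀ᵐ ω ∂μ, |X ω| ≤ B) (hYB : ∀ᵐ ω ∂μ, |Y ω| ≤ B)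
    (hXc : ∀ᵐ ω ∂μ, ω ∈ M → X ω = c) :
    |cov μ X Y| ≤ 4 * B ^ 2 * μ.real Mᶜ := by
  obtain ⟨c', hc'B, hXc'⟩ := exists_abs_le_of_ae_eq_on hB hXB hXc
  have hXℓ : MemLp X ∞ μ := .of_bound hX B hXB
  have hYℓ : MemLp Y ∞ μ := .of_bound hY B hYB
  have hEY : |∫ ω, Y ω ∂μ| ≤ B := by
    simpa using norm_integral_le_of_norm_le_const (f := Y) hYB
  rw [cov_eq_integral_sub_mul_sub (hXℓ.integrable le_top) (hYℓ.integrable le_top)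
    (hXℓ.integrable_mul (hYℓ.mono_exponent le_top : MemLp Y 1 μ)) c']
  refine abs_integral_le_of_ae_eq_zero_on ?_ ?_
  · filter_upwards [hXc'] with ω h hω
    rw [h hω, sub_self, zero_mul]
  · filter_upwards [hXB, hYB] with ω hXω hYω
    rw [abs_mul]
    have hX' : |X ω - c'| ≤ 2 * B := (abs_sub _ _).trans (by linarith)
    have hY' : |Y ω - ∫ ω', Y ω' ∂μ| ≤ 2 * B := (abs_sub _ _).trans (by linarith)
    nlinarith [abs_nonneg (X ω - c'), abs_nonneg (Y ω - ∫ ω', Y ω' ∂μ)]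

end

lemma cov_add_dotProduct_add_dotProduct {Ω ι : Type*} [MeasurableSpace Ω] {μ : Measure Ω}
    [IsProbabilityMeasure μ] [Fintype ι] {X Z : Ω → ℝ} {a b δ : Ω → ι → ℝ}
    (hind : IndepFun (fun ω => (X ω, Z ω, a ω, b ω)) δ μ)
    (hX : MemLp X ∞ μ) (hZ : MemLp Z ∞ μ) (ha : ∀ i, MemLp (fun ω => a ω i) ∞ μ)
    (hb : ∀ i, MemLp (fun ω => b ω i) ∞ μ) (hδ : ∀ i, MemLp (fun ω => δ ω i) ∞ μ)
    (hδ0 : ∀ i, ∫ ω, δ ω i ∂μ = 0)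
    {S : Matrix ι ι ℝ} (hS : ∀ i j, S i j = ∫ ω, δ ω i * δ ω j ∂μ) :
    cov μ (fun ω => X ω + a ω ⬝ᵥ δ ω) (fun ω => Z ω + b ω ⬝ᵥ δ ω)
      = cov μ X Z + ∫ ω, a ω ⬝ᵥ S *ᵥ b ω ∂μ := by
  have integrable : ∀ {f : Ω → ℝ}, MemLp f ∞ μ → Integrable f μ := fun hf => hf.integrable le_top
  have mul : ∀ {f g : Ω → ℝ}, MemLp f ∞ μ → MemLp g ∞ μ → MemLp (fun ω => f ω * g ω) ∞ μ :=
    fun hf hg => hg.mul hf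
  have dot : ∀ {c : Ω → ι → ℝ}, (∀ i, MemLp (fun ω => c ω i) ∞ μ) →
      MemLp (fun ω => c ω ⬝ᵥ δ ω) 2 μ := fun hc =>
    (memLp_finsetSum _ fun i _ => mul (hc i) (hδ i)).mono_exponent le_top
  have mean_zero : ∀ {c : Ω → ι → ℝ}, IndepFun c δ μ → (∀ i, MemLp (fun ω => c ω i) ∞ μ) →
      ∫ ω, c ω ⬝ᵥ δ ω ∂μ = 0 := fun hc hcℓ => by
    rw [hc.integral_dotProduct (fun i => integrable (hcℓ i)) (fun i => integrable (hδ i))]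
    simp [hδ0]
  have indep : ∀ {φ : ℝ × ℝ × (ι → ℝ) × (ι → ℝ) → ι → ℝ}, Measurable φ →
      IndepFun (fun ω => φ (X ω, Z ω, a ω, b ω)) δ μ := fun hφ => hind.comp hφ measurable_id
  have hXb : ∫ ω, X ω * (b ω ⬝ᵥ δ ω) ∂μ = 0 := by
    simp_rw [← smul_eq_mul, ← smul_dotProduct]
    exact mean_zero (indep (φ := fun x => x.1 • x.2.2.2) (by fun_prop))
      fun i => mul hX (hb i)
  have haZ : ∫ ω, (a ω ⬝ᵥ δ ω) * Z ω ∂μ = 0 := by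
    simp_rw [mul_comm _ (Z _), ← smul_eq_mul, ← smul_dotProduct]
    exact mean_zero (indep (φ := fun x => x.2.1 • x.2.2.1) (by fun_prop))
      fun i => mul hZ (ha i)
  have hab : IndepFun (fun ω => (a ω, b ω)) δ μ :=
    hind.comp (φ := fun x => (x.2.2.1, x.2.2.2)) (by fun_prop) measurable_id
  rw [cov_add_add_of_uncorrelated (hX.mono_exponent le_top) (hZ.mono_exponent le_top) (dot ha)
    (dot hb) (mean_zero (indep (φ := fun x => x.2.2.1) (by fun_prop)) ha)
    (mean_zero (indep (φ := fun x => x.2.2.2) (by fun_prop)) hb) hXb haZ,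
    hab.integral_dotProduct_mul_dotProduct (fun i j => integrable (mul (ha i) (hb j)))
      (fun i j => integrable (mul (hδ i) (hδ j))) hS]

theorem policy_level_covariance_lower_bound_general
    {Ω : Type*} [MeasurableSpace Ω] (μ : Measure Ω) [IsProbabilityMeasure μ]
    (d : ℕ) (v : Fin d → ℝ) (B : ℝ) (hB : 0 ≤ B)
    (zt zs : Ω → ℝ) (hzt : Measurable zt) (hzs : Measurable zs)
    (hztb : ∀ᵐ ω ∂μ, |zt ω| ≤ B) (hzsb : ∀ᵐ ω ∂μ, |zs ω| ≤ B)
    (Ht Hs : Ω → Matrix (Fin d) (Fin d) ℝ) (hHt : Measurable Ht) (hHs : Measurable Hs)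
    (hHtb : ∃ C : ℝ, ∀ᵐ ω ∂μ, ∀ i j, |Ht ω i j| ≤ C)
    (hHsb : ∃ C : ℝ, ∀ᵐ ω ∂μ, ∀ i j, |Hs ω i j| ≤ C)
    (δ : Ω → Fin d → ℝ) (hδ : Measurable δ)
    (hδb : ∃ C : ℝ, ∀ᵐ ω ∂μ, ∀ i, |δ ω i| ≤ C)
    (hδmean : ∀ i, (∫ ω, δ ω i ∂μ) = 0)
    (hindep : IndepFun δ (fun ω => (zt ω, zs ω, Ht ω, Hs ω)) μ)
    (Sig : Matrix (Fin d) (Fin d) ℝ) (hSig : ∀ i j, Sig i j = ∫ ω, δ ω i * δ ω j ∂μ)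
    (γ : ℝ) (hγ : γ = ∫ ω, v ⬝ᵥ (Ht ω * Sig * (Hs ω)ᵀ).mulVec v ∂μ)
    (M : Set Ω)
    (c : ℝ) (hconst : ∀ᵐ ω ∂μ, ω ∈ M → zt ω = c) :
    |cov μ (fun ω => zt ω + v ⬝ᵥ (Ht ω).mulVec (δ ω))
           (fun ω => zs ω + v ⬝ᵥ (Hs ω).mulVec (δ ω))|
      ≥ γ - 5 * B ^ 2 * (μ Mᶜ).toReal := by
  obtain ⟨Ct, hHtb⟩ := hHtb
  obtain ⟨Cs, hHsb⟩ := hHsb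
  obtain ⟨Cδ, hδb⟩ := hδb
  have hind : IndepFun (fun ω => (zt ω, zs ω, v ᵥ* Ht ω, v ᵥ* Hs ω)) δ μ :=
    hindep.symm.comp (φ := fun x => (x.1, x.2.1, v ᵥ* x.2.2.1, v ᵥ* x.2.2.2))
      (by fun_prop) measurable_id
  have hγ' : γ = ∫ ω, (v ᵥ* Ht ω) ⬝ᵥ Sig *ᵥ (v ᵥ* Hs ω) ∂μ := by
    simp only [hγ, ← mulVec_mulVec, dotProduct_mulVec, mulVec_transpose]
  have hcov : |cov μ zt zs| ≤ 4 * B ^ 2 * μ.real Mᶜ :=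
    abs_cov_le_of_ae_eq_on hB hzt.aestronglyMeasurable hzs.aestronglyMeasurable hztb hzsb hconst
  simp only [dotProduct_mulVec]
  rw [cov_add_dotProduct_add_dotProduct hind (.of_bound hzt.aestronglyMeasurable B hztb)
    (.of_bound hzs.aestronglyMeasurable B hzsb)
    (MemLp.vecMul_apply (fun i j => .of_bound (hHt.eval.eval).aestronglyMeasurable Ct
      (hHtb.mono fun ω h => h i j)) v)
    (MemLp.vecMul_apply (fun i j => .of_bound (hHs.eval.eval).aestronglyMeasurable Cs
      (hHsb.mono fun ω h => h i j)) v)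
    (fun i => .of_bound (hδ.eval).aestronglyMeasurable Cδ (hδb.mono fun ω h => h i))
    hδmean hSig, ← hγ', ← measureReal_def]
  linarith [le_abs_self (cov μ zt zs + γ), neg_abs_le (cov μ zt zs),
    (by positivity : 0 ≤ B ^ 2 * μ.real Mᶜ)]

/-- **Policy-level covariance lower bound (Proposition A.4).**
With `z̃_t = z_t + vᵀ H_t δ` and `z̃_s = z_s + vᵀ H_s δ`, where the zero-mean perturbation `δ`
is independent of `(z_t, z_s, H_t, H_s)`, `|z_t| ≤ B`, `|z_s| ≤ B` a.s., `z_t` is a.s. constant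
on the event `M`, and `γ = E[vᵀ H_t Σ H_sᵀ v]`, we have
`|Cov(z̃_t, z̃_s)| ≥ γ − 5·B²·P(Mᶜ)`. -/
theorem policy_level_covariance_lower_bound
    {Ω : Type*} [MeasurableSpace Ω] (μ : Measure Ω) [IsProbabilityMeasure μ]
    (d : ℕ) (v : Fin d → ℝ) (B : ℝ) (hB : 0 ≤ B)
    (zt zs : Ω → ℝ) (hzt : Measurable zt) (hzs : Measurable zs)
    (hztb : ∀ᵐ ω ∂μ, |zt ω| ≤ B) (hzsb : ∀ᵐ ω ∂μ, |zs ω| ≤ B)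
    (Ht Hs : Ω → Matrix (Fin d) (Fin d) ℝ) (hHt : Measurable Ht) (hHs : Measurable Hs)
    (hHtb : ∃ C : ℝ, ∀ᵐ ω ∂μ, ∀ i j, |Ht ω i j| ≤ C)
    (hHsb : ∃ C : ℝ, ∀ᵐ ω ∂μ, ∀ i j, |Hs ω i j| ≤ C)
    (δ : Ω → Fin d → ℝ) (hδ : Measurable δ)
    (hδb : ∃ C : ℝ, ∀ᵐ ω ∂μ, ∀ i, |δ ω i| ≤ C)
    (hδmean : ∀ i, (∫ ω, δ ω i ∂μ) = 0)
    (hindep : IndepFun δ (fun ω => (zt ω, zs ω, Ht ω, Hs ω)) μ)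
    (Sig : Matrix (Fin d) (Fin d) ℝ) (hSig : ∀ i j, Sig i j = ∫ ω, δ ω i * δ ω j ∂μ)
    (γ : ℝ) (hγ : γ = ∫ ω, v ⬝ᵥ (Ht ω * Sig * (Hs ω)ᵀ).mulVec v ∂μ)
    (M : Set Ω) (hM : MeasurableSet M)
    (c : ℝ) (hconst : ∀ᵐ ω ∂μ, ω ∈ M → zt ω = c) :
    |cov μ (fun ω => zt ω + v ⬝ᵥ (Ht ω).mulVec (δ ω))
           (fun ω => zs ω + v ⬝ᵥ (Hs ω).mulVec (δ ω))|
      ≥ γ - 5 * B ^ 2 * (μ Mᶜ).toReal :=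
  policy_level_covariance_lower_bound_general μ d v B hB zt zs hzt hzs hztb hzsb Ht Hs hHt hHs hHtb
    hHsb δ hδ hδb hδmean hindep Sig hSig γ hγ M c hconst
end

section
/- Let A be a nonempty finite type, let l : A → ℝ, and let μ be the standard Gumbel probability measure on ℝ, i.e., the measure with density x ↦ exp(−x − exp(−x)) with respect to Lebesgue measure. Let P be the product measure ⊗_{a ∈ A} μ on (A → ℝ), and fix a₀ ∈ A. Then P({G : A → ℝ | ∀ a ≠ a₀, l(a₀) + G(a₀) > l(a) + G(a)}) = exp(l(a₀)) / ∑_{a ∈ A} exp(l(a)). -/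
/-!
Condition on the noise `x = G a₀`. The outcome `a₀` wins iff `G a < x + (l a₀ - l a)` for every
`a ≠ a₀`; by independence this has probability `∏ F (x + l a₀ - l a)`, where
`F t = exp (-exp (-t))` is the Gumbel distribution function, and the product collapses to
`exp (-S e^{-x})` with `S = ∑_{a ≠ a₀} exp (l a - l a₀)`. Under `u = e^{-x}` the Gumbel density
becomes `e^{-u} du` on `(0, ∞)`, so averaging over `x` gives `∫₀^∞ e^{-(1 + S) u} du = 1 / (1 + S)`,
which is the softmax weight of `a₀`.
-/

open MeasureTheory

/-- The standard Gumbel probability measure on `ℝ`: the measure with Lebesgue density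
`x ↦ exp(−x − exp(−x))`. -/
noncomputable def gumbelMeasure : Measure ℝ :=
  (volume : Measure ℝ).withDensity fun x => ENNReal.ofReal (Real.exp (-x - Real.exp (-x)))

instance : SigmaFinite gumbelMeasure :=
  SigmaFinite.withDensity_of_ne_top (ae_of_all _ fun _ => ENNReal.ofReal_ne_top)

open Real Set

lemma lintegral_image_exp_neg {s : Set ℝ} (hs : MeasurableSet s) (g : ℝ → ENNReal) :
    ∫⁻ u in (fun x => exp (-x)) '' s, g u
      = ∫⁻ x in s, ENNReal.ofReal (exp (-x)) * g (exp (-x)) := by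
  rw [lintegral_image_eq_lintegral_abs_deriv_mul hs
    (fun x _ => ((hasDerivAt_neg x).exp).hasDerivWithinAt)
    ((exp_injective.comp neg_injective).injOn)]
  simp

lemma image_exp_neg_Iio (t : ℝ) : (fun x => exp (-x)) '' Iio t = Ioi (exp (-t)) := by
  rw [← image_exp_Ioi, ← image_neg_Iio, image_image]

lemma image_exp_neg_univ : (fun x => exp (-x)) '' univ = Ioi 0 := by
  rw [image_univ, ← range_exp]
  exact neg_surjective.range_comp exp

lemma setLIntegral_exp_neg_sub_mul_exp_neg {c : ℝ} (hc : 0 < c) {s : Set ℝ} (hs : MeasurableSet s)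
    {b : ℝ} (hb : (fun x => exp (-x)) '' s = Ioi b) :
    ∫⁻ x in s, ENNReal.ofReal (exp (-x - c * exp (-x))) = ENNReal.ofReal (exp (-(c * b)) / c) := by
  have hsplit : ∀ x, ENNReal.ofReal (exp (-x - c * exp (-x)))
      = ENNReal.ofReal (exp (-x)) * ENNReal.ofReal (exp (-c * exp (-x))) := fun x => by
    rw [← ENNReal.ofReal_mul (exp_pos _).le, ← exp_add, neg_mul, sub_eq_add_neg]
  have hc' : -c < 0 := neg_lt_zero.2 hc
  simp_rw [hsplit]
  rw [← lintegral_image_exp_neg hs (fun u => ENNReal.ofReal (exp (-c * u))), hb,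
    ← ofReal_integral_eq_lintegral_ofReal (integrableOn_exp_mul_Ioi hc' b)
      (ae_of_all _ fun _ => (exp_pos _).le), integral_exp_mul_Ioi hc']
  rw [neg_div_neg_eq, neg_mul]

lemma gumbelMeasure_Iio (t : ℝ) :
    gumbelMeasure (Iio t) = ENNReal.ofReal (exp (-exp (-t))) := by
  rw [gumbelMeasure, withDensity_apply _ measurableSet_Iio]
  simpa using setLIntegral_exp_neg_sub_mul_exp_neg one_pos measurableSet_Iio (image_exp_neg_Iio t)

lemma lintegral_exp_neg_mul_exp_neg_gumbelMeasure {c : ℝ} (hc : 0 ≤ c) :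
    ∫⁻ x, ENNReal.ofReal (exp (-(c * exp (-x)))) ∂gumbelMeasure = ENNReal.ofReal (1 + c)⁻¹ := by
  rw [gumbelMeasure, lintegral_withDensity_eq_lintegral_mul _ (by fun_prop) (by fun_prop)]
  have hmerge : ∀ x, ENNReal.ofReal (exp (-x - exp (-x))) * ENNReal.ofReal (exp (-(c * exp (-x))))
      = ENNReal.ofReal (exp (-x - (1 + c) * exp (-x))) := fun x => by
    rw [← ENNReal.ofReal_mul (exp_pos _).le, ← exp_add]
    ring_nf
  simp_rw [Pi.mul_apply, hmerge]
  rw [← setLIntegral_univ, setLIntegral_exp_neg_sub_mul_exp_neg (by linarith) MeasurableSet.univ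
    image_exp_neg_univ]
  simp

lemma measure_pi_eq_lintegral_slice {A X : Type*} [Fintype A] [DecidableEq A] [MeasurableSpace X]
    (μ : A → Measure X) [∀ a, SigmaFinite (μ a)] (a₀ : A) {s : Set (A → X)}
    (hs : MeasurableSet s) :
    Measure.pi μ s = ∫⁻ x, Measure.pi (fun a : {a // a ≠ a₀} => μ a)
      {y | (fun a => if h : a = a₀ then x else y ⟨a, h⟩) ∈ s} ∂μ a₀ := by
  let e := MeasurableEquiv.piEquivPiSubtypeProd (fun _ : A => X) (· = a₀)
  have he := (measurePreserving_piEquivPiSubtypeProd μ (· = a₀)).symm e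
  rw [← he.measure_preimage hs.nullMeasurableSet, Measure.prod_apply (e.symm.measurable hs)]
  -- `convert` reconciles two `Fintype` instances on the singleton subtype `{a // a = a₀}`.
  convert (((measurePreserving_piUnique fun a : {a // a = a₀} => μ a).symm _).lintegral_comp_emb
    (MeasurableEquiv.measurableEmbedding _) _).symm <;> rfl

lemma measure_pi_forall_ne_add_lt {A : Type*} [Fintype A] [DecidableEq A] (μ : A → Measure ℝ)
    [∀ a, SigmaFinite (μ a)] (l : A → ℝ) (a₀ : A) :
    Measure.pi μ {G | ∀ a, a ≠ a₀ → l a₀ + G a₀ > l a + G a}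
      = ∫⁻ x, ∏ a : {a // a ≠ a₀}, μ a (Iio (x + (l a₀ - l a))) ∂μ a₀ := by
  have hs : MeasurableSet {G : A → ℝ | ∀ a, a ≠ a₀ → l a₀ + G a₀ > l a + G a} := by
    simp only [ofPred_forall]
    exact .iInter fun a => .iInter fun _ => measurableSet_lt (by fun_prop) (by fun_prop)
  rw [measure_pi_eq_lintegral_slice μ a₀ hs]
  refine lintegral_congr fun x => ?_
  have hslice : {y : {a // a ≠ a₀} → ℝ | (fun a => if h : a = a₀ then x else y ⟨a, h⟩) ∈
      {G : A → ℝ | ∀ a, a ≠ a₀ → l a₀ + G a₀ > l a + G a}}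
      = univ.pi fun a : {a // a ≠ a₀} => Iio (x + (l a₀ - l a)) := by
    ext y
    simp only [mem_ofPred_eq, dif_pos, mem_pi, mem_univ, mem_Iio, true_implies, Subtype.forall]
    refine forall₂_congr fun a ha => ?_
    rw [dif_neg ha]
    constructor <;> intro <;> linarith
  rw [hslice, Measure.pi_pi]

lemma prod_gumbelMeasure_Iio_add {ι : Type*} (s : Finset ι) (c : ι → ℝ) (x : ℝ) :
    ∏ i ∈ s, gumbelMeasure (Iio (x + c i))
      = ENNReal.ofReal (exp (-((∑ i ∈ s, exp (-c i)) * exp (-x)))) := by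
  simp_rw [gumbelMeasure_Iio]
  rw [← ENNReal.ofReal_prod_of_nonneg fun _ _ => (exp_pos _).le, ← exp_sum, Finset.sum_mul,
    ← Finset.sum_neg_distrib]
  simp_rw [neg_add, exp_add, mul_comm]

lemma exp_div_sum_exp_eq_inv_one_add {A : Type*} [Fintype A] [DecidableEq A] (l : A → ℝ) (a₀ : A) :
    exp (l a₀) / ∑ a, exp (l a) = (1 + ∑ a : {a // a ≠ a₀}, exp (-(l a₀ - l a)))⁻¹ := by
  simp_rw [neg_sub, exp_sub, ← Finset.sum_div]
  rw [Fintype.sum_eq_add_sum_subtype_ne _ a₀]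
  field_simp

theorem gumbel_max_softmax_general
    {A : Type*} [Fintype A]
    (l : A → ℝ) (a₀ : A) :
    Measure.pi (fun _ : A => gumbelMeasure)
        {G : A → ℝ | ∀ a, a ≠ a₀ → l a₀ + G a₀ > l a + G a}
      = ENNReal.ofReal (Real.exp (l a₀) / ∑ a, Real.exp (l a)) := by
  classical
  simp_rw [measure_pi_forall_ne_add_lt, prod_gumbelMeasure_Iio_add]
  rw [lintegral_exp_neg_mul_exp_neg_gumbelMeasure (by positivity),
    exp_div_sum_exp_eq_inv_one_add l a₀]

/-- **Gumbel–Max equivalence.**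
Adding i.i.d. standard Gumbel noise `G a` to logits `l a` and taking the argmax produces each
outcome `a₀` with exactly its softmax probability `exp(l a₀) / ∑ a, exp(l a)`. -/
theorem gumbel_max_softmax
    {A : Type*} [Fintype A] [Nonempty A]
    (l : A → ℝ) (a₀ : A) :
    Measure.pi (fun _ : A => gumbelMeasure)
        {G : A → ℝ | ∀ a, a ≠ a₀ → l a₀ + G a₀ > l a + G a}
      = ENNReal.ofReal (Real.exp (l a₀) / ∑ a, Real.exp (l a)) :=
  gumbel_max_softmax_general l a₀
end
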